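/- arXiv:2505.02445 — 4 statements merged into one kernel-verified Lean document; each statement's English description precedes it below -/
import Mathlib

section
/- Let G be a graph on 2n vertices with minimum degree at least n that contains at least one perfect matching. Then the number of perfect matchings of G is at least 1/(2n^2) times the number of near-perfect matchings, i.e., |M_n(G)| / |M_{n-1}(G)| ≥ 1/(2n^2) (where M_{n-1}(G) is nonempty; equivalently |M_{n-1}(G)| ≤ 2n^2 |M_n(G)|). -/
/-- `M` is a matching of the simple graph `G`. -/
def IsMatchingOf {V : Type*} (G : SimpleGraph V) (M : Finset (Sym2 V)) : Prop :=
  (∀ e ∈ M, e ∈ G.edgeSet) ∧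
  ∀ e ∈ M, ∀ f ∈ M, e ≠ f → ∀ v, v ∈ e → v ∉ f

/-!
Let `M` be a near-perfect matching with uncovered vertices `u`, `v`. If `uv` is an edge, adding it
gives a perfect matching. Otherwise all neighbours of `u` and `v` lie among the `2n - 2` covered
vertices while `deg u + deg v ≥ 2n`, so by pigeonhole some edge `xy` of `M` has `u ~ x` and
`v ~ y`, and switching along the path `u x y v` gives a perfect matching. The perfect matching
together with the pair `{u, v}` determines `M`, hence `|M_{n-1}| ≤ (2n choose 2) |M_n| ≤ 2n² |M_n|`.
-/

open Finset

namespace IsMatchingOf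

variable {V : Type*} {G : SimpleGraph V} {M M' : Finset (Sym2 V)} {u x y : V}

lemma mono (hM : IsMatchingOf G M) (h : M' ⊆ M) : IsMatchingOf G M' :=
  ⟨fun e he => hM.1 e (h he), fun e he f hf => hM.2 e (h he) f (h hf)⟩

lemma ne_of_mem (hM : IsMatchingOf G M) (h : s(x, y) ∈ M) : x ≠ y :=
  G.ne_of_adj (hM.1 _ h)

lemma eq_of_mem_of_mem (hM : IsMatchingOf G M) (hx : s(u, x) ∈ M) (hy : s(u, y) ∈ M) : x = y := by
  by_contra hxy
  exact hM.2 _ hx _ hy (fun h => hxy (Sym2.congr_right.1 h)) u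
    (Sym2.mem_mk_left u x) (Sym2.mem_mk_left u y)

end IsMatchingOf

variable {V : Type*} [DecidableEq V]

def coveredVerts (M : Finset (Sym2 V)) : Finset V := M.biUnion Sym2.toFinset

@[simp]
lemma mem_coveredVerts {M : Finset (Sym2 V)} {w : V} : w ∈ coveredVerts M ↔ ∃ e ∈ M, w ∈ e := by
  simp [coveredVerts]

lemma coveredVerts_mono {M M' : Finset (Sym2 V)} (h : M' ⊆ M) : coveredVerts M' ⊆ coveredVerts M :=
  biUnion_subset_biUnion_of_subset_left _ h

lemma mem_or_mem_of_two_lt_card_inter_add {x y : V} (hxy : x ≠ y) {A B : Finset V}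
    (h : 2 < #({x, y} ∩ A) + #({x, y} ∩ B)) : (x ∈ A ∧ y ∈ B) ∨ (y ∈ A ∧ x ∈ B) := by
  by_cases hxA : x ∈ A <;> by_cases hyA : y ∈ A <;> by_cases hxB : x ∈ B <;>
    by_cases hyB : y ∈ B <;> simp_all [insert_inter_of_mem, insert_inter_of_notMem]

namespace IsMatchingOf

variable {G : SimpleGraph V} {M : Finset (Sym2 V)} {u v w : V}

lemma notMem_coveredVerts_erase (hM : IsMatchingOf G M) {e : Sym2 V} (he : e ∈ M) (hw : w ∈ e) :
    w ∉ coveredVerts (M.erase e) := by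
  simp only [mem_coveredVerts, mem_erase, not_exists, not_and]
  exact fun f ⟨hfe, hf⟩ hwf => hM.2 e he f hf (Ne.symm hfe) w hw hwf

lemma pairwiseDisjoint_toFinset (hM : IsMatchingOf G M) :
    (M : Set (Sym2 V)).PairwiseDisjoint Sym2.toFinset := fun e he f hf hef =>
  disjoint_left.2 fun w hwe hwf =>
    hM.2 e he f hf hef w (Sym2.mem_toFinset.1 hwe) (Sym2.mem_toFinset.1 hwf)

lemma card_coveredVerts (hM : IsMatchingOf G M) : #(coveredVerts M) = 2 * #M := by
  rw [coveredVerts, card_biUnion hM.pairwiseDisjoint_toFinset,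
    sum_congr rfl fun e he => Sym2.card_toFinset_of_not_isDiag e
      (G.not_isDiag_of_mem_edgeSet (hM.1 e he)), sum_const, smul_eq_mul, mul_comm]

lemma sum_card_inter {A : Finset V} (hM : IsMatchingOf G M) (hA : A ⊆ coveredVerts M) :
    ∑ e ∈ M, #(e.toFinset ∩ A) = #A := by
  rw [← card_biUnion, ← biUnion_inter, ← coveredVerts, inter_eq_right.2 hA]
  exact hM.pairwiseDisjoint_toFinset.mono fun _ => inter_subset_left

lemma exists_mem_of_card_add_card_gt {A B : Finset V} (hM : IsMatchingOf G M)
    (hA : A ⊆ coveredVerts M) (hB : B ⊆ coveredVerts M) (h : 2 * #M < #A + #B) :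
    ∃ x y, s(x, y) ∈ M ∧ x ∈ A ∧ y ∈ B := by
  rw [← hM.sum_card_inter hA, ← hM.sum_card_inter hB, ← sum_add_distrib, mul_comm,
    ← smul_eq_mul, ← sum_const] at h
  obtain ⟨e, he, hlt⟩ := exists_lt_of_sum_lt h
  induction e using Sym2.ind with | _ x y =>
  rw [Sym2.toFinset_mk_eq] at hlt
  rcases mem_or_mem_of_two_lt_card_inter_add (hM.ne_of_mem he) hlt with ⟨hx, hy⟩ | ⟨hy, hx⟩
  · exact ⟨x, y, he, hx, hy⟩
  · exact ⟨y, x, Sym2.eq_swap ▸ he, hy, hx⟩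

lemma insert_mk (hM : IsMatchingOf G M) (huv : G.Adj u v) (hu : u ∉ coveredVerts M)
    (hv : v ∉ coveredVerts M) : IsMatchingOf G (insert s(u, v) M) := by
  have hfresh : ∀ f ∈ M, ∀ w ∈ s(u, v), w ∉ f := by
    rintro f hf w hw hwf
    rcases Sym2.mem_iff.1 hw with rfl | rfl
    exacts [hu (mem_coveredVerts.2 ⟨f, hf, hwf⟩), hv (mem_coveredVerts.2 ⟨f, hf, hwf⟩)]
  refine ⟨fun e he => ?_, fun e he f hf hef w hwe hwf => ?_⟩
  · rcases mem_insert.1 he with rfl | he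
    exacts [huv, hM.1 e he]
  · rcases mem_insert.1 he with rfl | he <;> rcases mem_insert.1 hf with rfl | hf
    · exact hef rfl
    · exact hfresh f hf w hwe hwf
    · exact hfresh e he w hwf hwe
    · exact hM.2 e he f hf hef w hwe hwf

end IsMatchingOf

/-- `M` is recovered from `N` by deleting the edges of `N` at `u` and `v` and, when these are two
edges `ux`, `vy`, adding `xy`; this undoes augmenting `M` along `u v` or along `u x y v`. -/
def ReducesTo (N : Finset (Sym2 V)) (u v : V) (M : Finset (Sym2 V)) : Prop :=
  (s(u, v) ∈ N ∧ M = N.filter (fun e => u ∉ e ∧ v ∉ e)) ∨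
    ∃ x y, x ≠ v ∧ y ≠ u ∧ s(u, x) ∈ N ∧ s(v, y) ∈ N ∧
      M = insert s(x, y) (N.filter (fun e => u ∉ e ∧ v ∉ e))

namespace ReducesTo

variable {G : SimpleGraph V} {M M₁ M₂ N : Finset (Sym2 V)} {u v : V}

lemma symm (h : ReducesTo N u v M) : ReducesTo N v u M := by
  have hcore : N.filter (fun e => v ∉ e ∧ u ∉ e) = N.filter (fun e => u ∉ e ∧ v ∉ e) := by
    simp only [and_comm]
  rcases h with ⟨huv, rfl⟩ | ⟨x, y, hx, hy, hux, hvy, rfl⟩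
  · exact Or.inl ⟨Sym2.eq_swap ▸ huv, hcore.symm⟩
  · exact Or.inr ⟨y, x, hy, hx, hvy, hux, by rw [Sym2.eq_swap, hcore]⟩

lemma unique (hN : IsMatchingOf G N) (h₁ : ReducesTo N u v M₁) (h₂ : ReducesTo N u v M₂) :
    M₁ = M₂ := by
  rcases h₁ with ⟨huv₁, rfl⟩ | ⟨x₁, y₁, hx₁, -, hux₁, hvy₁, rfl⟩ <;>
    rcases h₂ with ⟨huv₂, rfl⟩ | ⟨x₂, y₂, hx₂, -, hux₂, hvy₂, rfl⟩
  · rfl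
  · exact absurd (hN.eq_of_mem_of_mem hux₂ huv₁) hx₂
  · exact absurd (hN.eq_of_mem_of_mem hux₁ huv₂) hx₁
  · rw [hN.eq_of_mem_of_mem hux₁ hux₂, hN.eq_of_mem_of_mem hvy₁ hvy₂]

end ReducesTo

section Augmentation

variable {G : SimpleGraph V} {M : Finset (Sym2 V)} {u v x y : V}

lemma filter_notMem_eq_self (hu : u ∉ coveredVerts M) (hv : v ∉ coveredVerts M) :
    M.filter (fun e => u ∉ e ∧ v ∉ e) = M :=
  filter_true_of_mem fun e he =>
    ⟨fun h => hu (mem_coveredVerts.2 ⟨e, he, h⟩), fun h => hv (mem_coveredVerts.2 ⟨e, he, h⟩)⟩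

lemma reducesTo_insert (hu : u ∉ coveredVerts M) (hv : v ∉ coveredVerts M) :
    ReducesTo (insert s(u, v) M) u v M := by
  refine Or.inl ⟨mem_insert_self _ _, ?_⟩
  rw [filter_insert, if_neg (by simp), filter_notMem_eq_self hu hv]

lemma card_insert_mk (hu : u ∉ coveredVerts M) : #(insert s(u, v) M) = #M + 1 :=
  card_insert_of_notMem fun h => hu (mem_coveredVerts.2 ⟨_, h, Sym2.mem_mk_left u v⟩)

lemma IsMatchingOf.augment_path (hM : IsMatchingOf G M) (hxy : s(x, y) ∈ M) (hux : G.Adj u x)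
    (hvy : G.Adj v y) (huv : u ≠ v) (hu : u ∉ coveredVerts M) (hv : v ∉ coveredVerts M) :
    IsMatchingOf G (insert s(u, x) (insert s(v, y) (M.erase s(x, y)))) ∧
      #(insert s(u, x) (insert s(v, y) (M.erase s(x, y)))) = #M + 1 := by
  have hx : x ∈ coveredVerts M := mem_coveredVerts.2 ⟨_, hxy, Sym2.mem_mk_left x y⟩
  have hy : y ∈ coveredVerts M := mem_coveredVerts.2 ⟨_, hxy, Sym2.mem_mk_right x y⟩
  have hsub := coveredVerts_mono (erase_subset s(x, y) M)
  have hME := hM.mono (erase_subset s(x, y) M)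
  have hvE : v ∉ coveredVerts (M.erase s(x, y)) := fun h => hv (hsub h)
  have hyE := hM.notMem_coveredVerts_erase hxy (Sym2.mem_mk_right x y)
  have huI : u ∉ coveredVerts (insert s(v, y) (M.erase s(x, y))) := by
    simp only [mem_coveredVerts, exists_mem_insert, Sym2.mem_iff, not_or]
    exact ⟨⟨huv, by rintro rfl; exact hu hy⟩, fun h => hu (hsub (mem_coveredVerts.2 h))⟩
  have hxI : x ∉ coveredVerts (insert s(v, y) (M.erase s(x, y))) := by
    simp only [mem_coveredVerts, exists_mem_insert, Sym2.mem_iff, not_or]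
    exact ⟨⟨by rintro rfl; exact hv hx, hM.ne_of_mem hxy⟩,
      hM.notMem_coveredVerts_erase hxy (Sym2.mem_mk_left x y) ∘ mem_coveredVerts.2⟩
  refine ⟨(hME.insert_mk hvy hvE hyE).insert_mk hux huI hxI, ?_⟩
  rw [card_insert_mk huI, card_insert_mk hvE, card_erase_of_mem hxy,
    Nat.sub_add_cancel (card_pos.2 ⟨_, hxy⟩)]

lemma reducesTo_augment_path (hxy : s(x, y) ∈ M) (hu : u ∉ coveredVerts M)
    (hv : v ∉ coveredVerts M) :
    ReducesTo (insert s(u, x) (insert s(v, y) (M.erase s(x, y)))) u v M := by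
  have hx : x ≠ v := by rintro rfl; exact hv (mem_coveredVerts.2 ⟨_, hxy, Sym2.mem_mk_left x y⟩)
  have hy : y ≠ u := by rintro rfl; exact hu (mem_coveredVerts.2 ⟨_, hxy, Sym2.mem_mk_right x y⟩)
  refine Or.inr ⟨x, y, hx, hy, mem_insert_self _ _, mem_insert_of_mem (mem_insert_self _ _), ?_⟩
  have hsub := coveredVerts_mono (erase_subset s(x, y) M)
  rw [filter_insert, if_neg (by simp), filter_insert, if_neg (by simp),
    filter_notMem_eq_self (fun h => hu (hsub h)) (fun h => hv (hsub h)), insert_erase hxy]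

end Augmentation

section Counting

variable {G : SimpleGraph V} {M : Finset (Sym2 V)}

lemma IsMatchingOf.exists_uncovered_pair [Fintype V] {n : ℕ} (hV : Fintype.card V = 2 * n)
    (hn : 0 < n) (hM : IsMatchingOf G M) (hMc : #M = n - 1) :
    ∃ u v, u ≠ v ∧ u ∉ coveredVerts M ∧ v ∉ coveredVerts M ∧
      ∀ w, w ≠ u → w ≠ v → w ∈ coveredVerts M := by
  obtain ⟨u, v, huv, huv'⟩ := card_eq_two.1 (by
    rw [card_compl, hM.card_coveredVerts, hMc, hV]; omega : #(coveredVerts M)ᶜ = 2)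
  have hmem : ∀ w, w ∉ coveredVerts M ↔ w = u ∨ w = v := fun w => by
    rw [← mem_compl, huv', mem_insert, mem_singleton]
  refine ⟨u, v, huv, (hmem u).2 (Or.inl rfl), (hmem v).2 (Or.inr rfl), fun w hwu hwv => ?_⟩
  by_contra hw
  rcases (hmem w).1 hw with h | h
  exacts [hwu h, hwv h]

theorem IsMatchingOf.exists_reducesTo [Fintype V] [DecidableRel G.Adj] {n : ℕ}
    (hV : Fintype.card V = 2 * n) (hn : 0 < n) (hdeg : ∀ v, n ≤ G.degree v)
    (hM : IsMatchingOf G M) (hMc : #M = n - 1) :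
    ∃ N u v, u ≠ v ∧ IsMatchingOf G N ∧ #N = n ∧ ReducesTo N u v M := by
  obtain ⟨u, v, huv, hu, hv, hcov⟩ := hM.exists_uncovered_pair hV hn hMc
  by_cases hadj : G.Adj u v
  · exact ⟨_, u, v, huv, hM.insert_mk hadj hu hv, by rw [card_insert_mk hu]; omega,
      reducesTo_insert hu hv⟩
  have hNu : G.neighborFinset u ⊆ coveredVerts M := fun w hw => by
    rw [SimpleGraph.mem_neighborFinset] at hw
    exact hcov w (G.ne_of_adj hw).symm fun h => hadj (h ▸ hw)
  have hNv : G.neighborFinset v ⊆ coveredVerts M := fun w hw => by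
    rw [SimpleGraph.mem_neighborFinset] at hw
    exact hcov w (fun h => hadj (h ▸ hw.symm)) (G.ne_of_adj hw).symm
  obtain ⟨x, y, hxy, hux, hvy⟩ := hM.exists_mem_of_card_add_card_gt hNu hNv (by
    rw [G.card_neighborFinset_eq_degree, G.card_neighborFinset_eq_degree, hMc]
    have := hdeg u; have := hdeg v; omega)
  rw [SimpleGraph.mem_neighborFinset] at hux hvy
  obtain ⟨hN, hNc⟩ := hM.augment_path hxy hux hvy huv hu hv
  exact ⟨_, u, v, huv, hN, by omega, reducesTo_augment_path hxy hu hv⟩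

theorem card_nearPerfect_le [Fintype V] (G : SimpleGraph V) [DecidableRel G.Adj] {n : ℕ}
    (hV : Fintype.card V = 2 * n) (hn : 0 < n) (hdeg : ∀ v, n ≤ G.degree v) :
    Nat.card {M : Finset (Sym2 V) // IsMatchingOf G M ∧ #M = n - 1} ≤
      (2 * n).choose 2 * Nat.card {M : Finset (Sym2 V) // IsMatchingOf G M ∧ #M = n} := by
  choose N u v huv hN hNc hred using
    fun M : {M : Finset (Sym2 V) // IsMatchingOf G M ∧ #M = n - 1} =>
      M.2.1.exists_reducesTo hV hn hdeg M.2.2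
  let f (M : {M : Finset (Sym2 V) // IsMatchingOf G M ∧ #M = n - 1}) :
      {p : Sym2 V // ¬p.IsDiag} × {M : Finset (Sym2 V) // IsMatchingOf G M ∧ #M = n} :=
    (⟨s(u M, v M), by simpa using huv M⟩, ⟨N M, hN M, hNc M⟩)
  have hf : f.Injective := by
    intro M₁ M₂ h
    simp only [f, Prod.mk.injEq, Subtype.mk.injEq, Sym2.eq_iff] at h
    obtain ⟨hp, hNN⟩ := h
    have h₁ := hred M₁
    rw [hNN] at h₁
    apply Subtype.ext
    rcases hp with ⟨hu, hv⟩ | ⟨hu, hv⟩ <;> rw [hu, hv] at h₁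
    exacts [h₁.unique (hN M₂) (hred M₂), h₁.symm.unique (hN M₂) (hred M₂)]
  calc _ ≤ _ := Nat.card_le_card_of_injective f hf
    _ = _ := by
      rw [Nat.card_prod, Nat.card_eq_fintype_card (α := {p : Sym2 V // ¬p.IsDiag}),
        Sym2.card_subtype_not_diag, hV]

end Counting

theorem stmt4_general (n : ℕ) (hn : 0 < n) (G : SimpleGraph (Fin (2 * n)))
    (hdeg : ∀ v : Fin (2 * n), n ≤ Nat.card {w // G.Adj v w}) :
    Nat.card {M : Finset (Sym2 (Fin (2 * n))) // IsMatchingOf G M ∧ M.card = n - 1}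
      ≤ 2 * n ^ 2 *
        Nat.card {M : Finset (Sym2 (Fin (2 * n))) // IsMatchingOf G M ∧ M.card = n} := by
  classical
  have hdeg' : ∀ v, n ≤ G.degree v := fun v => by
    rw [← G.card_neighborSet_eq_degree, ← Nat.card_eq_fintype_card]
    exact hdeg v
  have hchoose : (2 * n).choose 2 ≤ 2 * n ^ 2 := by
    rw [Nat.choose_two_right]
    exact Nat.div_le_of_le_mul (by nlinarith [Nat.sub_le (2 * n) 1])
  calc _ ≤ (2 * n).choose 2 * _ := card_nearPerfect_le G (Fintype.card_fin _) hn hdeg'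
    _ ≤ _ := Nat.mul_le_mul_right _ hchoose

/-- Let `G` be a graph on `2n` vertices with minimum degree at least `n` that
contains at least one perfect matching (a matching of size `n`). Then the number
of near-perfect matchings (size `n-1`) is at most `2 n^2` times the number of
perfect matchings, i.e. `|M_n(G)| / |M_{n-1}(G)| ≥ 1/(2n^2)`. -/
theorem stmt4 (n : ℕ) (hn : 0 < n) (G : SimpleGraph (Fin (2 * n)))
    (hdeg : ∀ v : Fin (2 * n), n ≤ Nat.card {w // G.Adj v w})
    (hpm : ∃ M : Finset (Sym2 (Fin (2 * n))), IsMatchingOf G M ∧ M.card = n) :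
    Nat.card {M : Finset (Sym2 (Fin (2 * n))) // IsMatchingOf G M ∧ M.card = n - 1}
      ≤ 2 * n ^ 2 *
        Nat.card {M : Finset (Sym2 (Fin (2 * n))) // IsMatchingOf G M ∧ M.card = n} :=
  stmt4_general n hn G hdeg
end

section
/- Let G be a graph on 2n vertices with minimum degree at least n, and let M be a near-perfect matching of G with unmatched vertices u and v. If (u,v) is not an edge of G, then there exists an edge (w,z) in M such that both (u,w) and (v,z) are edges of G. -/
/-- Let `G` be a graph on `2n` vertices with minimum degree at least `n`, and let
`M` be a near-perfect matching (size `n-1`) whose unmatched vertices are `u` and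
`v`. If `u` and `v` are not adjacent, then there is an edge `(w,z) ∈ M` with both
`(u,w)` and `(v,z)` edges of `G`. -/
theorem stmt5 (n : ℕ) (G : SimpleGraph (Fin (2 * n)))
    (hdeg : ∀ x : Fin (2 * n), n ≤ Nat.card {y // G.Adj x y})
    (M : Finset (Sym2 (Fin (2 * n)))) (hM : IsMatchingOf G M)
    (hcard : M.card = n - 1)
    (u v : Fin (2 * n)) (huv : u ≠ v)
    (hu : ∀ e ∈ M, u ∉ e) (hv : ∀ e ∈ M, v ∉ e)
    (hnadj : ¬ G.Adj u v) :
    ∃ w z : Fin (2 * n), s(w, z) ∈ M ∧ G.Adj u w ∧ G.Adj v z := by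
  classical
  by_contra hcon
  push_neg at hcon
  have hn : 1 ≤ n := by have := u.isLt; omega
  -- vertex set of an edge
  set t : Sym2 (Fin (2*n)) → Finset (Fin (2*n)) :=
    fun e => Finset.univ.filter (fun x => x ∈ e) with ht
  have hmem : ∀ e x, x ∈ t e ↔ x ∈ e := by
    intro e x; simp [ht]
  -- covered set
  set S : Finset (Fin (2*n)) := M.biUnion t with hS
  have hdisj : ∀ e ∈ M, ∀ f ∈ M, e ≠ f → Disjoint (t e) (t f) := by
    intro e he f hf hef
    rw [Finset.disjoint_left]
    intro x hxe hxf
    exact hM.2 e he f hf hef x ((hmem e x).1 hxe) ((hmem f x).1 hxf)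
  have htwo : ∀ e ∈ M, ∃ w z, w ≠ z ∧ e = s(w, z) := by
    intro e he
    induction e with
    | h w z =>
      refine ⟨w, z, ?_, rfl⟩
      intro h; subst h
      exact (G.irrefl (G.mem_edgeSet.1 (hM.1 _ he)))
  have hcardt : ∀ e ∈ M, (t e).card = 2 := by
    intro e he
    obtain ⟨w, z, hwz, rfl⟩ := htwo e he
    have : t s(w,z) = {w, z} := by
      ext x; simp [ht, Sym2.mem_iff]
    rw [this, Finset.card_pair hwz]
  have hScard : S.card = 2 * (n - 1) := by
    rw [hS, Finset.card_biUnion hdisj, Finset.sum_congr rfl hcardt,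
      Finset.sum_const, hcard, smul_eq_mul, mul_comm]
  -- complement of S is {u, v}
  have huS : u ∉ S := by
    simp only [hS, Finset.mem_biUnion]
    rintro ⟨e, he, hue⟩
    exact hu e he ((hmem e u).1 hue)
  have hvS : v ∉ S := by
    simp only [hS, Finset.mem_biUnion]
    rintro ⟨e, he, hve⟩
    exact hv e he ((hmem e v).1 hve)
  have hcompl : Sᶜ = {u, v} := by
    refine (Finset.eq_of_subset_of_card_le ?_ ?_).symm
    · intro x hx
      simp only [Finset.mem_insert, Finset.mem_singleton] at hx
      rcases hx with rfl | rfl <;> simp [Finset.mem_compl, huS, hvS]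
    · rw [Finset.card_compl, hScard, Fintype.card_fin, Finset.card_pair huv]
      omega
  -- neighbors
  set Nu : Finset (Fin (2*n)) := Finset.univ.filter (fun x => G.Adj u x) with hNu
  set Nv : Finset (Fin (2*n)) := Finset.univ.filter (fun x => G.Adj v x) with hNv
  have hNucard : n ≤ Nu.card := by
    have := hdeg u
    rwa [Nat.card_eq_fintype_card, Fintype.card_subtype] at this
  have hNvcard : n ≤ Nv.card := by
    have := hdeg v
    rwa [Nat.card_eq_fintype_card, Fintype.card_subtype] at this
  have hNuS : Nu ⊆ S := by
    intro x hx
    rw [hNu, Finset.mem_filter] at hx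
    by_contra hxS
    have : x ∈ Sᶜ := Finset.mem_compl.2 hxS
    rw [hcompl] at this
    simp only [Finset.mem_insert, Finset.mem_singleton] at this
    rcases this with rfl | rfl
    · exact G.irrefl hx.2
    · exact hnadj hx.2
  have hNvS : Nv ⊆ S := by
    intro x hx
    rw [hNv, Finset.mem_filter] at hx
    by_contra hxS
    have : x ∈ Sᶜ := Finset.mem_compl.2 hxS
    rw [hcompl] at this
    simp only [Finset.mem_insert, Finset.mem_singleton] at this
    rcases this with rfl | rfl
    · exact hnadj (hx.2.symm)
    · exact G.irrefl hx.2
  -- decompose Nu, Nv over edges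
  have hdecomp : ∀ N : Finset (Fin (2*n)), N ⊆ S →
      N.card = ∑ e ∈ M, (t e ∩ N).card := by
    intro N hNS
    have : N = M.biUnion (fun e => t e ∩ N) := by
      ext x
      simp only [Finset.mem_biUnion, Finset.mem_inter]
      constructor
      · intro hx
        obtain ⟨e, he, hxe⟩ := Finset.mem_biUnion.1 (hNS hx)
        exact ⟨e, he, hxe, hx⟩
      · rintro ⟨e, he, _, hx⟩; exact hx
    nth_rewrite 1 [this]
    rw [Finset.card_biUnion]
    intro e he f hf hef
    exact (hdisj e he f hf hef).mono Finset.inter_subset_left Finset.inter_subset_left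
  -- per-edge bound
  have hbound : ∀ e ∈ M, (t e ∩ Nu).card + (t e ∩ Nv).card ≤ 2 := by
    intro e he
    obtain ⟨w, z, hwz, rfl⟩ := htwo e he
    have h1 := hcon w z he
    have h2 := hcon z w (by rwa [Sym2.eq_swap])
    have hte : t s(w,z) = {w, z} := by
      ext x; simp [ht, Sym2.mem_iff]
    have key : ∀ a : Fin (2*n), ({w,z} ∩ Finset.univ.filter (fun x => G.Adj a x)).card
        = (if G.Adj a w then 1 else 0) + (if G.Adj a z then 1 else 0) := by
      intro a
      have : ({w,z} : Finset (Fin (2*n))) ∩ Finset.univ.filter (fun x => G.Adj a x)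
          = Finset.filter (fun x => G.Adj a x) {w,z} := by
        ext x; simp [and_comm]
      rw [this, Finset.card_filter, Finset.sum_pair hwz]
    have c1 : ¬(G.Adj u w ∧ G.Adj v z) := fun h => h1 h.1 h.2
    have c2 : ¬(G.Adj u z ∧ G.Adj v w) := fun h => h2 h.1 h.2
    rw [hte, hNu, hNv, key u, key v]
    split_ifs <;> first | omega | tauto
  -- combine
  have hsum : Nu.card + Nv.card ≤ 2 * (n - 1) := by
    rw [hdecomp Nu hNuS, hdecomp Nv hNvS, ← Finset.sum_add_distrib]
    calc ∑ e ∈ M, ((t e ∩ Nu).card + (t e ∩ Nv).card)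
        ≤ ∑ e ∈ M, 2 := Finset.sum_le_sum hbound
      _ = 2 * (n-1) := by rw [Finset.sum_const, hcard, smul_eq_mul, mul_comm]
  omega
end

section
/- Let G be a balanced bipartite graph with parts of size n each, with minimum degree at least n - ξ (for ξ ≤ n). Then for any matching M of size n' ≥ ξ in G, the number of perfect matchings of the subgraph induced by the vertex set of M is at least (n' - ξ)!. Consequently the ratio Haf(M)/n'! lies in [1/n'^ξ, 1]. -/
/-- The number of perfect matchings (`Hafnian`) of the bipartite subgraph of the
bipartite graph with adjacency relation `R` induced by the vertex set of the
matching `M` (a set of pairwise vertex-disjoint pairs): matchings `N` using edges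
of `R` whose left and right supports equal those of `M`. -/
noncomputable def bHaf {n : ℕ} (R : Fin n → Fin n → Prop)
    (M : Finset (Fin n × Fin n)) : ℕ :=
  Nat.card {N : Finset (Fin n × Fin n) //
    (∀ p ∈ N, R p.1 p.2) ∧
    (∀ p ∈ N, ∀ q ∈ N, p ≠ q → p.1 ≠ q.1 ∧ p.2 ≠ q.2) ∧
    N.image Prod.fst = M.image Prod.fst ∧
    N.image Prod.snd = M.image Prod.snd}

open Finset

namespace BHafAux

open scoped Classical

variable {n : ℕ}

def isPM (R : Fin n → Fin n → Prop) (A B : Finset (Fin n)) (N : Finset (Fin n × Fin n)) : Prop :=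
  (∀ p ∈ N, R p.1 p.2) ∧
  (∀ p ∈ N, ∀ q ∈ N, p ≠ q → p.1 ≠ q.1 ∧ p.2 ≠ q.2) ∧
  N.image Prod.fst = A ∧ N.image Prod.snd = B

noncomputable def pm (R : Fin n → Fin n → Prop) (A B : Finset (Fin n)) :
    Finset (Finset (Fin n × Fin n)) :=
  Finset.univ.filter (isPM R A B)

lemma mem_pm {R : Fin n → Fin n → Prop} {A B : Finset (Fin n)} {N : Finset (Fin n × Fin n)} :
    N ∈ pm R A B ↔ isPM R A B N := by
  simp [pm]

lemma card_eq_of_isPM {R : Fin n → Fin n → Prop} {A B : Finset (Fin n)}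
    {N : Finset (Fin n × Fin n)} (h : isPM R A B N) :
    A.card = N.card ∧ B.card = N.card := by
  obtain ⟨_, hinj, hA, hB⟩ := h
  constructor
  · rw [← hA]
    apply Finset.card_image_of_injOn
    intro p hp q hq hpq
    by_contra hne
    exact (hinj p hp q hq hne).1 hpq
  · rw [← hB]
    apply Finset.card_image_of_injOn
    intro p hp q hq hpq
    by_contra hne
    exact (hinj p hp q hq hne).2 hpq

lemma isPM_insert {R : Fin n → Fin n → Prop} {A B : Finset (Fin n)} {a b : Fin n}
    {N : Finset (Fin n × Fin n)} (h : isPM R (A.erase a) (B.erase b) N)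
    (ha : a ∈ A) (hb : b ∈ B) (hR : R a b) :
    isPM R A B (insert (a, b) N) := by
  obtain ⟨hedge, hinj, hA, hB⟩ := h
  have hfst : ∀ p ∈ N, p.1 ≠ a := by
    intro p hp
    have : p.1 ∈ A.erase a := hA ▸ Finset.mem_image_of_mem Prod.fst hp
    exact Finset.ne_of_mem_erase this
  have hsnd : ∀ p ∈ N, p.2 ≠ b := by
    intro p hp
    have : p.2 ∈ B.erase b := hB ▸ Finset.mem_image_of_mem Prod.snd hp
    exact Finset.ne_of_mem_erase this
  refine ⟨?_, ?_, ?_, ?_⟩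
  · intro p hp
    rcases Finset.mem_insert.mp hp with h | h
    · subst h; exact hR
    · exact hedge p h
  · intro p hp q hq hpq
    rcases Finset.mem_insert.mp hp with h1 | h1 <;>
      rcases Finset.mem_insert.mp hq with h2 | h2
    · exact absurd (h1.trans h2.symm) hpq
    · subst h1; exact ⟨fun h => hfst q h2 h.symm, fun h => hsnd q h2 h.symm⟩
    · subst h2; exact ⟨hfst p h1, hsnd p h1⟩
    · exact hinj p h1 q h2 hpq
  · rw [Finset.image_insert, hA]
    simp [Finset.insert_erase ha]
  · rw [Finset.image_insert, hB]
    simp [Finset.insert_erase hb]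

lemma isPM_erase {R : Fin n → Fin n → Prop} {A B : Finset (Fin n)}
    {N : Finset (Fin n × Fin n)} (h : isPM R A B N) {p : Fin n × Fin n} (hp : p ∈ N) :
    isPM R (A.erase p.1) (B.erase p.2) (N.erase p) := by
  obtain ⟨hedge, hinj, hA, hB⟩ := h
  refine ⟨fun q hq => hedge q (Finset.mem_of_mem_erase hq),
    fun q hq r hr hqr => hinj q (Finset.mem_of_mem_erase hq) r (Finset.mem_of_mem_erase hr) hqr,
    ?_, ?_⟩
  · apply Finset.ext
    intro x
    constructor
    · intro hx
      obtain ⟨q, hq, rfl⟩ := Finset.mem_image.mp hx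
      obtain ⟨hqp, hqN⟩ := Finset.mem_erase.mp hq
      exact Finset.mem_erase.mpr ⟨(hinj q hqN p hp hqp).1, hA ▸ Finset.mem_image_of_mem _ hqN⟩
    · intro hx
      obtain ⟨hxp, hxA⟩ := Finset.mem_erase.mp hx
      obtain ⟨q, hqN, hq1⟩ := Finset.mem_image.mp (hA.symm ▸ hxA : x ∈ N.image Prod.fst)
      refine Finset.mem_image.mpr ⟨q, Finset.mem_erase.mpr ⟨?_, hqN⟩, hq1⟩
      rintro rfl
      exact hxp hq1.symm
  · apply Finset.ext
    intro x
    constructor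
    · intro hx
      obtain ⟨q, hq, rfl⟩ := Finset.mem_image.mp hx
      obtain ⟨hqp, hqN⟩ := Finset.mem_erase.mp hq
      exact Finset.mem_erase.mpr ⟨(hinj q hqN p hp hqp).2, hB ▸ Finset.mem_image_of_mem _ hqN⟩
    · intro hx
      obtain ⟨hxp, hxB⟩ := Finset.mem_erase.mp hx
      obtain ⟨q, hqN, hq2⟩ := Finset.mem_image.mp (hB.symm ▸ hxB : x ∈ N.image Prod.snd)
      refine Finset.mem_image.mpr ⟨q, Finset.mem_erase.mpr ⟨?_, hqN⟩, hq2⟩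
      rintro rfl
      exact hxp hq2.symm

lemma isPM_union {R : Fin n → Fin n → Prop} {A₁ B₁ A₂ B₂ : Finset (Fin n)}
    {N₁ N₂ : Finset (Fin n × Fin n)} (h₁ : isPM R A₁ B₁ N₁) (h₂ : isPM R A₂ B₂ N₂)
    (hA : Disjoint A₁ A₂) (hB : Disjoint B₁ B₂) :
    isPM R (A₁ ∪ A₂) (B₁ ∪ B₂) (N₁ ∪ N₂) := by
  obtain ⟨he₁, hi₁, hA₁, hB₁⟩ := h₁
  obtain ⟨he₂, hi₂, hA₂, hB₂⟩ := h₂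
  have f1 : ∀ p ∈ N₁, p.1 ∈ A₁ := fun p hp => hA₁ ▸ Finset.mem_image_of_mem _ hp
  have f2 : ∀ p ∈ N₂, p.1 ∈ A₂ := fun p hp => hA₂ ▸ Finset.mem_image_of_mem _ hp
  have s1 : ∀ p ∈ N₁, p.2 ∈ B₁ := fun p hp => hB₁ ▸ Finset.mem_image_of_mem _ hp
  have s2 : ∀ p ∈ N₂, p.2 ∈ B₂ := fun p hp => hB₂ ▸ Finset.mem_image_of_mem _ hp
  refine ⟨?_, ?_, ?_, ?_⟩
  · intro p hp
    rcases Finset.mem_union.mp hp with h | h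
    exacts [he₁ p h, he₂ p h]
  · intro p hp q hq hpq
    rcases Finset.mem_union.mp hp with h1 | h1 <;> rcases Finset.mem_union.mp hq with h2 | h2
    · exact hi₁ p h1 q h2 hpq
    · exact ⟨fun h => (Finset.disjoint_left.mp hA (f1 p h1)) (h ▸ f2 q h2),
        fun h => (Finset.disjoint_left.mp hB (s1 p h1)) (h ▸ s2 q h2)⟩
    · exact ⟨fun h => (Finset.disjoint_left.mp hA (f1 q h2)) (h ▸ f2 p h1),
        fun h => (Finset.disjoint_left.mp hB (s1 q h2)) (h ▸ s2 p h1)⟩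
    · exact hi₂ p h1 q h2 hpq
  · rw [Finset.image_union, hA₁, hA₂]
  · rw [Finset.image_union, hB₁, hB₂]

/-- The neighbourhood of `S` within `B`. -/
noncomputable def nb (R : Fin n → Fin n → Prop) (S B : Finset (Fin n)) : Finset (Fin n) :=
  B.filter (fun b => ∃ a ∈ S, R a b)

/-- Hall's condition. -/
def HallC (R : Fin n → Fin n → Prop) (A B : Finset (Fin n)) : Prop :=
  ∀ S ⊆ A, S.card ≤ (nb R S B).card

lemma pm_nonempty {R : Fin n → Fin n → Prop} {A B : Finset (Fin n)}
    (hcard : A.card = B.card) (hH : HallC R A B) : (pm R A B).Nonempty := by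
  have key : ∀ s : Finset ↥A, s.card ≤ (s.biUnion (fun a => B.filter (R a.1))).card := by
    intro s
    have h1 : s.biUnion (fun a => B.filter (R a.1)) = nb R (s.image Subtype.val) B := by
      apply Finset.ext
      intro b
      simp only [Finset.mem_biUnion, Finset.mem_filter, nb, Finset.mem_image]
      constructor
      · rintro ⟨a, ha, hb, hR⟩
        exact ⟨hb, a.1, ⟨a, ha, rfl⟩, hR⟩
      · rintro ⟨hb, a, ⟨a', ha', rfl⟩, hR⟩
        exact ⟨a', ha', hb, hR⟩
    have h2 : s.card = (s.image Subtype.val).card :=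
      (Finset.card_image_of_injective s Subtype.val_injective).symm
    rw [h1, h2]
    exact hH _ (by intro x hx; obtain ⟨a, _, rfl⟩ := Finset.mem_image.mp hx; exact a.2)
  obtain ⟨f, hfinj, hf⟩ := (Finset.all_card_le_biUnion_card_iff_exists_injective
    (fun a : ↥A => B.filter (R a.1))).mp key
  refine ⟨A.attach.image (fun a => (a.1, f a)), mem_pm.mpr ⟨?_, ?_, ?_, ?_⟩⟩
  · intro p hp
    obtain ⟨a, _, rfl⟩ := Finset.mem_image.mp hp
    exact (Finset.mem_filter.mp (hf a)).2
  · intro p hp q hq hpq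
    obtain ⟨a, _, rfl⟩ := Finset.mem_image.mp hp
    obtain ⟨a', _, rfl⟩ := Finset.mem_image.mp hq
    have hne : a ≠ a' := by rintro rfl; exact hpq rfl
    exact ⟨fun h => hne (Subtype.ext h), fun h => hne (hfinj h)⟩
  · apply Finset.ext
    intro x
    constructor
    · intro hx
      obtain ⟨p, hp, rfl⟩ := Finset.mem_image.mp hx
      obtain ⟨a, _, rfl⟩ := Finset.mem_image.mp hp
      exact a.2
    · intro hx
      exact Finset.mem_image.mpr ⟨(x, f ⟨x, hx⟩),
        Finset.mem_image.mpr ⟨⟨x, hx⟩, Finset.mem_attach _ _, rfl⟩, rfl⟩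
  · have himg : (A.attach.image (fun a => (a.1, f a))).image Prod.snd
        = A.attach.image (fun a => f a) := by
      rw [Finset.image_image]
      rfl
    rw [himg]
    apply Finset.eq_of_subset_of_card_le
    · intro b hb
      obtain ⟨a, _, rfl⟩ := Finset.mem_image.mp hb
      exact (Finset.mem_filter.mp (hf a)).1
    · rw [Finset.card_image_of_injective _ hfinj, Finset.card_attach, hcard]

lemma pm_card_le {R : Fin n → Fin n → Prop} :
    ∀ (k : ℕ) (A B : Finset (Fin n)), A.card = k → B.card = k →
      (pm R A B).card ≤ k.factorial := by
  intro k
  induction k with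
  | zero =>
    intro A B hA _
    have : pm R A B ⊆ {∅} := by
      intro N hN
      obtain ⟨_, _, hfst, _⟩ := mem_pm.mp hN
      have : N.card = 0 := by
        have := (card_eq_of_isPM (mem_pm.mp hN)).1
        omega
      simp [Finset.card_eq_zero.mp this]
    simpa using Finset.card_le_card this
  | succ k ih =>
    intro A B hA hB
    have hAne : A.Nonempty := Finset.card_pos.mp (by omega)
    obtain ⟨a, ha⟩ := hAne
    have hsub : pm R A B ⊆ B.biUnion (fun b =>
        (pm R (A.erase a) (B.erase b)).image (insert (a, b))) := by
      intro N hN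
      have hPM := mem_pm.mp hN
      obtain ⟨hedge, hinj, hfst, hsnd⟩ := hPM
      obtain ⟨p, hpN, hpa⟩ := Finset.mem_image.mp (hfst.symm ▸ ha : a ∈ N.image Prod.fst)
      refine Finset.mem_biUnion.mpr ⟨p.2, hsnd ▸ Finset.mem_image_of_mem _ hpN, ?_⟩
      refine Finset.mem_image.mpr ⟨N.erase p, ?_, ?_⟩
      · have := isPM_erase ⟨hedge, hinj, hfst, hsnd⟩ hpN
        rw [hpa] at this
        exact mem_pm.mpr this
      · rw [← hpa]
        exact Finset.insert_erase hpN
    calc (pm R A B).card ≤ _ := Finset.card_le_card hsub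
      _ ≤ ∑ b ∈ B, ((pm R (A.erase a) (B.erase b)).image (insert (a, b))).card :=
        Finset.card_biUnion_le
      _ ≤ ∑ _b ∈ B, k.factorial := by
        apply Finset.sum_le_sum
        intro b hb
        calc ((pm R (A.erase a) (B.erase b)).image (insert (a, b))).card
            ≤ (pm R (A.erase a) (B.erase b)).card := Finset.card_image_le
          _ ≤ k.factorial := ih _ _ (by rw [Finset.card_erase_of_mem ha, hA]; omega)
              (by rw [Finset.card_erase_of_mem hb, hB]; omega)
      _ = (k + 1) * k.factorial := by rw [Finset.sum_const, hB, smul_eq_mul]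
      _ = (k + 1).factorial := (Nat.factorial_succ k).symm

lemma nb_erase {R : Fin n → Fin n → Prop} (S B : Finset (Fin n)) (b : Fin n) :
    nb R S (B.erase b) = (nb R S B).erase b := by
  apply Finset.ext
  intro x
  simp only [nb, Finset.mem_filter, Finset.mem_erase]
  tauto

lemma filter_erase (p : Fin n → Prop) (B : Finset (Fin n)) (b : Fin n) :
    (B.erase b).filter p = (B.filter p).erase b := by
  apply Finset.ext
  intro x
  simp only [Finset.mem_filter, Finset.mem_erase]
  tauto

lemma pm_card_lower {R : Fin n → Fin n → Prop} :
    ∀ (k : ℕ) (d : ℕ) (A B : Finset (Fin n)), A.card = k → B.card = k → d ≤ k →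
      HallC R A B → (∀ a ∈ A, d ≤ (B.filter (R a)).card) →
      d.factorial ≤ (pm R A B).card := by
  intro k
  induction k using Nat.strong_induction_on with
  | _ k ih =>
    intro d A B hA hB hdk hH hdeg
    rcases Nat.eq_zero_or_pos d with rfl | hd
    · simpa using Finset.card_pos.mpr (pm_nonempty (hA.trans hB.symm) hH)
    by_cases hcrit : ∃ S ⊆ A, S.Nonempty ∧ S ≠ A ∧ (nb R S B).card = S.card
    · -- critical set case
      obtain ⟨S, hSA, hSne, hSA', hScard⟩ := hcrit
      set T := nb R S B with hT
      have hTB : T ⊆ B := Finset.filter_subset _ _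
      have hs_lt : S.card < k := by
        rw [← hA]; exact Finset.card_lt_card (Finset.ssubset_iff_subset_ne.mpr ⟨hSA, hSA'⟩)
      have hdegS : ∀ a ∈ S, d ≤ (T.filter (R a)).card := by
        intro a haS
        refine le_trans (hdeg a (hSA haS)) (Finset.card_le_card ?_)
        intro b hb
        obtain ⟨hbB, hab⟩ := Finset.mem_filter.mp hb
        exact Finset.mem_filter.mpr ⟨Finset.mem_filter.mpr ⟨hbB, a, haS, hab⟩, hab⟩
      have hd_le_s : d ≤ S.card := by
        obtain ⟨a, haS⟩ := hSne
        calc d ≤ (T.filter (R a)).card := hdegS a haS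
          _ ≤ T.card := Finset.card_le_card (Finset.filter_subset _ _)
          _ = S.card := hScard
      have hHS : HallC R S T := by
        intro S' hS'
        have hsub : nb R S' B ⊆ T := by
          intro b hb
          obtain ⟨hbB, a, haS', hab⟩ := Finset.mem_filter.mp hb
          exact Finset.mem_filter.mpr ⟨hbB, a, hS' haS', hab⟩
        have heq : nb R S' T = nb R S' B := by
          apply Finset.Subset.antisymm
          · intro b hb
            exact Finset.mem_filter.mpr ⟨hTB (Finset.mem_filter.mp hb).1,
              (Finset.mem_filter.mp hb).2⟩
          · intro b hb
            exact Finset.mem_filter.mpr ⟨hsub hb, (Finset.mem_filter.mp hb).2⟩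
        rw [heq]
        exact hH S' (hS'.trans hSA)
      have h1 : d.factorial ≤ (pm R S T).card :=
        ih S.card hs_lt d S T rfl hScard hd_le_s hHS hdegS
      set A2 := A \ S with hA2
      set B2 := B \ T with hB2
      have hA2card : A2.card = k - S.card := by rw [hA2, Finset.card_sdiff_of_subset hSA, hA]
      have hB2card : B2.card = k - S.card := by rw [hB2, Finset.card_sdiff_of_subset hTB, hB, hScard]
      have hH2 : HallC R A2 B2 := by
        intro S2 hS2
        have hS2A : S2 ⊆ A := hS2.trans (Finset.sdiff_subset)
        have hS2S : Disjoint S2 S := by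
          apply Finset.disjoint_left.mpr
          intro x hx hxS
          exact (Finset.mem_sdiff.mp (hS2 hx)).2 hxS
        have e1 : nb R S2 B2 = (nb R S2 B) \ T := by
          apply Finset.ext
          intro x
          simp only [nb, hB2, Finset.mem_filter, Finset.mem_sdiff]
          tauto
        have e2 : nb R (S2 ∪ S) B ⊆ nb R S2 B ∪ T := by
          intro x hx
          obtain ⟨hxB, a, haU, hax⟩ := Finset.mem_filter.mp hx
          rcases Finset.mem_union.mp haU with h | h
          · exact Finset.mem_union_left _ (Finset.mem_filter.mpr ⟨hxB, a, h, hax⟩)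
          · exact Finset.mem_union_right _ (Finset.mem_filter.mpr ⟨hxB, a, h, hax⟩)
        have key : S2.card + S.card ≤ (nb R (S2 ∪ S) B).card := by
          rw [← Finset.card_union_of_disjoint hS2S]
          exact hH _ (Finset.union_subset hS2A hSA)
        have e3 : nb R S2 B ∪ T ⊆ ((nb R S2 B) \ T) ∪ T := by
          intro x hx
          rcases Finset.mem_union.mp hx with h | h
          · by_cases hxT : x ∈ T
            · exact Finset.mem_union_right _ hxT
            · exact Finset.mem_union_left _ (Finset.mem_sdiff.mpr ⟨h, hxT⟩)
          · exact Finset.mem_union_right _ h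
        have : S2.card + S.card ≤ ((nb R S2 B) \ T).card + T.card :=
          le_trans key (le_trans (Finset.card_le_card (e2.trans e3)) (Finset.card_union_le _ _))
        rw [e1]
        rw [hScard] at this
        omega
      obtain ⟨N2, hN2⟩ := pm_nonempty (hA2card.trans hB2card.symm) hH2
      have hN2pm := mem_pm.mp hN2
      have hmaps : ∀ N1 ∈ pm R S T, N1 ∪ N2 ∈ pm R A B := by
        intro N1 hN1
        have := isPM_union (mem_pm.mp hN1) hN2pm
          (Finset.disjoint_sdiff) (Finset.disjoint_sdiff)
        rw [Finset.union_sdiff_of_subset hSA, Finset.union_sdiff_of_subset hTB] at this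
        exact mem_pm.mpr this
      have hfilter : ∀ N1 ∈ pm R S T, (N1 ∪ N2).filter (fun p => p.1 ∈ S) = N1 := by
        intro N1 hN1
        obtain ⟨_, _, hfst1, _⟩ := mem_pm.mp hN1
        obtain ⟨_, _, hfst2, _⟩ := hN2pm
        apply Finset.ext
        intro p
        simp only [Finset.mem_filter, Finset.mem_union]
        constructor
        · rintro ⟨h | h, hpS⟩
          · exact h
          · exact absurd hpS (Finset.mem_sdiff.mp
              (hfst2 ▸ Finset.mem_image_of_mem Prod.fst h)).2
        · intro h
          exact ⟨Or.inl h, hfst1 ▸ Finset.mem_image_of_mem Prod.fst h⟩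
      calc d.factorial ≤ (pm R S T).card := h1
        _ ≤ (pm R A B).card := by
          apply Finset.card_le_card_of_injOn (fun N1 => N1 ∪ N2) hmaps
          intro N1 hN1 N1' hN1' heq
          have heq2 : N1 ∪ N2 = N1' ∪ N2 := heq
          rw [← hfilter N1 hN1, ← hfilter N1' hN1', heq2]
    · -- no critical set
      push_neg at hcrit
      have hAne : A.Nonempty := Finset.card_pos.mp (by omega)
      obtain ⟨a, ha⟩ := hAne
      have hk : 1 ≤ k := le_trans hd hdk
      have hstep : ∀ b ∈ B.filter (R a),
          (d - 1).factorial ≤ (pm R (A.erase a) (B.erase b)).card := by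
        intro b hb
        have hbB : b ∈ B := (Finset.mem_filter.mp hb).1
        apply ih (k - 1) (by omega) (d - 1)
        · rw [Finset.card_erase_of_mem ha, hA]
        · rw [Finset.card_erase_of_mem hbB, hB]
        · omega
        · intro S hS
          rcases Finset.eq_empty_or_nonempty S with rfl | hSne
          · simp
          have hSA : S ⊆ A := hS.trans (Finset.erase_subset _ _)
          have hSneA : S ≠ A := by
            rintro rfl
            exact (Finset.mem_erase.mp (hS ha)).1 rfl
          have hstrict : S.card + 1 ≤ (nb R S B).card := by
            have h1 := hH S hSA
            have h2 := hcrit S hSA hSne hSneA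
            omega
          rw [nb_erase]
          calc S.card ≤ (nb R S B).card - 1 := by omega
            _ ≤ ((nb R S B).erase b).card := by
              rcases Finset.decidableMem b (nb R S B) with h | h
              · rw [Finset.erase_eq_of_notMem h]; omega
              · rw [Finset.card_erase_of_mem h]
        · intro a' ha'
          have : d ≤ (B.filter (R a')).card := hdeg a' (Finset.mem_of_mem_erase ha')
          rw [filter_erase]
          rcases Finset.decidableMem b (B.filter (R a')) with h | h
          · rw [Finset.erase_eq_of_notMem h]; omega
          · rw [Finset.card_erase_of_mem h]; omega
      have hsubU : (B.filter (R a)).biUnion (fun b =>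
          (pm R (A.erase a) (B.erase b)).image (insert (a, b))) ⊆ pm R A B := by
        intro N hN
        obtain ⟨b, hb, hN⟩ := Finset.mem_biUnion.mp hN
        obtain ⟨N', hN', rfl⟩ := Finset.mem_image.mp hN
        exact mem_pm.mpr (isPM_insert (mem_pm.mp hN') ha (Finset.mem_filter.mp hb).1
          (Finset.mem_filter.mp hb).2)
      have hnotmem : ∀ b : Fin n, ∀ N' ∈ pm R (A.erase a) (B.erase b), (a, b) ∉ N' := by
        intro b N' hN' hmem
        obtain ⟨_, _, hfst, _⟩ := mem_pm.mp hN'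
        exact (Finset.mem_erase.mp (hfst ▸ Finset.mem_image_of_mem Prod.fst hmem)).1 rfl
      have hdisj : ∀ b₁ ∈ B.filter (R a), ∀ b₂ ∈ B.filter (R a), b₁ ≠ b₂ →
          Disjoint ((pm R (A.erase a) (B.erase b₁)).image (insert (a, b₁)))
            ((pm R (A.erase a) (B.erase b₂)).image (insert (a, b₂))) := by
        intro b₁ hb₁ b₂ hb₂ hne
        apply Finset.disjoint_left.mpr
        intro N hN1 hN2
        obtain ⟨N₁, hN₁, rfl⟩ := Finset.mem_image.mp hN1
        obtain ⟨N₂, hN₂, hEq⟩ := Finset.mem_image.mp hN2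
        have hNpm : insert (a, b₁) N₁ ∈ pm R A B := hsubU
          (Finset.mem_biUnion.mpr ⟨b₁, hb₁, Finset.mem_image_of_mem _ hN₁⟩)
        obtain ⟨_, hinj, _, _⟩ := mem_pm.mp hNpm
        have hm1 : (a, b₁) ∈ insert (a, b₁) N₁ := Finset.mem_insert_self _ _
        have hm2 : (a, b₂) ∈ insert (a, b₁) N₁ := by
          rw [← hEq]; exact Finset.mem_insert_self _ _
        have : (a, b₁) ≠ (a, b₂) := by
          intro h
          exact hne (congrArg Prod.snd h)
        exact (hinj _ hm1 _ hm2 this).1 rfl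
      obtain ⟨e, rfl⟩ : ∃ e, d = e + 1 := ⟨d - 1, by omega⟩
      calc (e + 1).factorial = (e + 1) * (e + 1 - 1).factorial := by
            simp [Nat.factorial_succ]
        _ ≤ (B.filter (R a)).card * (e + 1 - 1).factorial :=
            Nat.mul_le_mul_right _ (hdeg a ha)
        _ = ∑ _b ∈ B.filter (R a), (e + 1 - 1).factorial := by
            rw [Finset.sum_const, smul_eq_mul]
        _ ≤ ∑ b ∈ B.filter (R a),
              ((pm R (A.erase a) (B.erase b)).image (insert (a, b))).card := by
            apply Finset.sum_le_sum
            intro b hb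
            rw [Finset.card_image_of_injOn]
            · exact hstep b hb
            · intro N₁ hN₁ N₂ hN₂ heq
              have e1 : (insert (a, b) N₁).erase (a, b) = N₁ :=
                Finset.erase_insert (hnotmem b N₁ hN₁)
              have e2 : (insert (a, b) N₂).erase (a, b) = N₂ :=
                Finset.erase_insert (hnotmem b N₂ hN₂)
              rw [← e1, ← e2, heq]
        _ = ((B.filter (R a)).biUnion (fun b =>
              (pm R (A.erase a) (B.erase b)).image (insert (a, b)))).card :=
            (Finset.card_biUnion hdisj).symm
        _ ≤ (pm R A B).card := Finset.card_le_card hsubU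

lemma fact_le_pow_mul_fact : ∀ m k : ℕ, k ≤ m → m.factorial ≤ m ^ k * (m - k).factorial := by
  intro m k
  induction k with
  | zero => simp
  | succ k ihk =>
    intro hk
    have h1 : m.factorial ≤ m ^ k * (m - k).factorial := ihk (by omega)
    have h2 : m - k = (m - (k + 1)) + 1 := by omega
    calc m.factorial ≤ m ^ k * (m - k).factorial := h1
      _ = m ^ k * ((m - k) * (m - (k + 1)).factorial) := by
          rw [h2, Nat.factorial_succ, ← h2]
      _ ≤ m ^ k * (m * (m - (k + 1)).factorial) := by
          apply Nat.mul_le_mul_left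
          apply Nat.mul_le_mul_right
          omega
      _ = m ^ (k + 1) * (m - (k + 1)).factorial := by ring

lemma bHaf_eq {n : ℕ} (R : Fin n → Fin n → Prop) (M : Finset (Fin n × Fin n)) :
    bHaf R M = (pm R (M.image Prod.fst) (M.image Prod.snd)).card := by
  have h : bHaf R M
      = Nat.card {N // isPM R (M.image Prod.fst) (M.image Prod.snd) N} := rfl
  rw [h, Nat.card_eq_fintype_card, Fintype.card_subtype, pm]

end BHafAux

/-- For a balanced bipartite graph with parts of size `n` and minimum degree at
least `n - ξ` (with `ξ ≤ n`): for any matching `M` of size `n' ≥ ξ`, the number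
of perfect matchings of the subgraph induced by the vertex set of `M` is at least
`(n' - ξ)!`; consequently the ratio `Haf(M)/n'!` lies in `[1/n'^ξ, 1]`. -/
theorem stmt7 (n ξ : ℕ) (hξ : ξ ≤ n) (R : Fin n → Fin n → Prop)
    (hdeg1 : ∀ a : Fin n, n - ξ ≤ Nat.card {b // R a b})
    (hdeg2 : ∀ b : Fin n, n - ξ ≤ Nat.card {a // R a b})
    (M : Finset (Fin n × Fin n)) (n' : ℕ) (hMcard : M.card = n') (hn' : ξ ≤ n')
    (hMedge : ∀ p ∈ M, R p.1 p.2)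
    (hMinj : ∀ p ∈ M, ∀ q ∈ M, p ≠ q → p.1 ≠ q.1 ∧ p.2 ≠ q.2) :
    Nat.factorial (n' - ξ) ≤ bHaf R M ∧
    bHaf R M ≤ Nat.factorial n' ∧
    Nat.factorial n' ≤ n' ^ ξ * bHaf R M := by
  classical
  open BHafAux in
  set A := M.image Prod.fst with hA
  set B := M.image Prod.snd with hB
  have hMpm : M ∈ pm R A B := mem_pm.mpr ⟨hMedge, hMinj, rfl, rfl⟩
  have hcards := card_eq_of_isPM (mem_pm.mp hMpm)
  have hAcard : A.card = n' := by rw [hcards.1, hMcard]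
  have hBcard : B.card = n' := by rw [hcards.2, hMcard]
  -- Hall condition from the matching M
  have hHall : HallC R A B := by
    intro S hS
    set W := M.filter (fun p => p.1 ∈ S) with hW
    have hWfst : W.image Prod.fst = S := by
      apply Finset.Subset.antisymm
      · intro x hx
        obtain ⟨p, hp, rfl⟩ := Finset.mem_image.mp hx
        exact (Finset.mem_filter.mp hp).2
      · intro x hx
        obtain ⟨p, hpM, hpx⟩ := Finset.mem_image.mp (hS hx)
        exact Finset.mem_image.mpr ⟨p, Finset.mem_filter.mpr ⟨hpM, hpx ▸ hx⟩, hpx⟩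
    have hWsnd : W.image Prod.snd ⊆ nb R S B := by
      intro x hx
      obtain ⟨p, hp, rfl⟩ := Finset.mem_image.mp hx
      obtain ⟨hpM, hp1⟩ := Finset.mem_filter.mp hp
      exact Finset.mem_filter.mpr ⟨Finset.mem_image_of_mem _ hpM, p.1, hp1, hMedge p hpM⟩
    have injfst : Set.InjOn (Prod.fst : Fin n × Fin n → Fin n) ↑W := by
      intro p hp q hq hpq
      by_contra hne
      exact (hMinj p (Finset.mem_filter.mp (Finset.mem_coe.mp hp)).1 q
        (Finset.mem_filter.mp (Finset.mem_coe.mp hq)).1 hne).1 hpq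
    have injsnd : Set.InjOn (Prod.snd : Fin n × Fin n → Fin n) ↑W := by
      intro p hp q hq hpq
      by_contra hne
      exact (hMinj p (Finset.mem_filter.mp (Finset.mem_coe.mp hp)).1 q
        (Finset.mem_filter.mp (Finset.mem_coe.mp hq)).1 hne).2 hpq
    have c1 : S.card = W.card := by
      rw [← hWfst]
      exact Finset.card_image_of_injOn injfst
    have c2 : W.card = (W.image Prod.snd).card :=
      (Finset.card_image_of_injOn injsnd).symm
    rw [c1, c2]
    exact Finset.card_le_card hWsnd
  -- minimum degree within B
  have hdeg : ∀ a ∈ A, n' - ξ ≤ (B.filter (R a)).card := by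
    intro a _
    have h1 : (Finset.univ.filter (R a)).card = Nat.card {b // R a b} := by
      rw [Nat.card_eq_fintype_card, Fintype.card_subtype]
    have h2 : n - ξ ≤ (Finset.univ.filter (R a)).card := h1 ▸ hdeg1 a
    have h3 : (Finset.univ.filter (fun b => ¬ R a b)).card ≤ ξ := by
      have := Finset.card_filter_add_card_filter_not
        (s := (Finset.univ : Finset (Fin n))) (p := R a)
      simp only [Finset.card_univ, Fintype.card_fin] at this
      omega
    have h4 : B \ B.filter (R a) ⊆ Finset.univ.filter (fun b => ¬ R a b) := by
      intro x hx
      obtain ⟨hxB, hxn⟩ := Finset.mem_sdiff.mp hx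
      refine Finset.mem_filter.mpr ⟨Finset.mem_univ _, fun hr => hxn ?_⟩
      exact Finset.mem_filter.mpr ⟨hxB, hr⟩
    have h5 : (B \ B.filter (R a)).card ≤ ξ := le_trans (Finset.card_le_card h4) h3
    have h6 : (B \ B.filter (R a)).card = B.card - (B.filter (R a)).card :=
      Finset.card_sdiff_of_subset (Finset.filter_subset _ _)
    have h7 : (B.filter (R a)).card ≤ B.card := Finset.card_le_card (Finset.filter_subset _ _)
    omega
  have hlow : (n' - ξ).factorial ≤ (pm R A B).card :=
    pm_card_lower n' (n' - ξ) A B hAcard hBcard (by omega) hHall hdeg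
  have hup : (pm R A B).card ≤ n'.factorial := pm_card_le n' A B hAcard hBcard
  rw [bHaf_eq]
  refine ⟨hlow, hup, ?_⟩
  calc n'.factorial ≤ n' ^ ξ * (n' - ξ).factorial := fact_le_pow_mul_fact n' ξ hn'
    _ ≤ n' ^ ξ * (pm R A B).card := Nat.mul_le_mul_left _ hlow
end

section
/- Consider the 'squares in a cycle' graph G_n: n squares arranged in a cycle, where in each square the four vertices are labeled clockwise 1–4, with an extra edge from vertex 1 to vertex 3 of each square, and an edge from vertex 2 of each square to vertex 4 of the previous square. Then the number of perfect matchings of G_n is exactly 1 + 2^n. -/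
/-- Adjacency of the "`n` squares arranged in a cycle" graph `G_n`. A vertex is a
pair (square index, position in square), positions `0,1,2,3` standing for the
vertices labeled `1,2,3,4` clockwise. Within each square all pairs are adjacent
except positions `1`–`3` (the vertices labeled `2` and `4`): this gives the four
square sides plus the diagonal from vertex `1` to vertex `3`. In addition, the
vertex labeled `2` (position `1`) of each square is adjacent to the vertex
labeled `4` (position `3`) of the previous square in the cycle. -/
def sqAdj (n : ℕ) (u v : Fin n × Fin 4) : Prop :=
  (u.1 = v.1 ∧ u.2 ≠ v.2 ∧ ¬(u.2 = 1 ∧ v.2 = 3) ∧ ¬(u.2 = 3 ∧ v.2 = 1)) ∨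
  (v.1.val = (u.1.val + 1) % n ∧ v.2 = 1 ∧ u.2 = 3) ∨
  (u.1.val = (v.1.val + 1) % n ∧ u.2 = 1 ∧ v.2 = 3)

namespace Stmt18Aux

abbrev V (n : ℕ) := Fin n × Fin 4

variable {n : ℕ}

/-- next square index in the cycle -/
def nxt (i : Fin n) : Fin n := ⟨(i.1 + 1) % n, Nat.mod_lt _ i.pos⟩

/-- previous square index in the cycle -/
def prv (i : Fin n) : Fin n := ⟨(i.1 + (n - 1)) % n, Nat.mod_lt _ i.pos⟩

lemma nxt_prv (i : Fin n) : nxt (prv i) = i := by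
  have h := i.pos
  have h2 := i.2
  apply Fin.ext
  show ((i.1 + (n - 1)) % n + 1) % n = i.1
  rw [Nat.mod_add_mod]
  have : i.1 + (n - 1) + 1 = i.1 + n := by omega
  rw [this, Nat.add_mod_right, Nat.mod_eq_of_lt h2]

lemma prv_nxt (i : Fin n) : prv (nxt i) = i := by
  have h := i.pos
  have h2 := i.2
  apply Fin.ext
  show ((i.1 + 1) % n + (n - 1)) % n = i.1
  rw [Nat.mod_add_mod]
  have : i.1 + 1 + (n - 1) = i.1 + n := by omega
  rw [this, Nat.add_mod_right, Nat.mod_eq_of_lt h2]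

lemma nxt_val (i : Fin n) : (nxt i).1 = (i.1 + 1) % n := rfl

lemma eq_prv_of_nxt_eq {i j : Fin n} (h : nxt j = i) : j = prv i := by
  rw [← h, prv_nxt]

lemma nxt_iter_val (t : ℕ) (i : Fin n) : (nxt^[t] i).1 = (i.1 + t) % n := by
  induction t with
  | zero => simp [Nat.mod_eq_of_lt i.2]
  | succ t ih =>
      rw [Function.iterate_succ_apply', nxt_val, ih, Nat.mod_add_mod]
      ring_nf

lemma exists_iter (i k : Fin n) : ∃ t, nxt^[t] i = k := by
  refine ⟨n - i.1 + k.1, Fin.ext ?_⟩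
  rw [nxt_iter_val]
  have h1 := i.2
  have h2 := k.2
  have : i.1 + (n - i.1 + k.1) = n + k.1 := by omega
  rw [this, Nat.add_mod_left, Nat.mod_eq_of_lt h2]

/-- the matching using all inter-square edges plus diagonals -/
def MA (n : ℕ) : Finset (Sym2 (V n)) :=
  (Finset.univ.image fun i : Fin n => s(((i, 0) : V n), (i, 2))) ∪
  (Finset.univ.image fun i : Fin n => s(((i, 3) : V n), (nxt i, 1)))

def eA (f : Fin n → Bool) (i : Fin n) : Sym2 (V n) :=
  if f i then s((i, 0), (i, 1)) else s((i, 0), (i, 3))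

def eB (f : Fin n → Bool) (i : Fin n) : Sym2 (V n) :=
  if f i then s((i, 2), (i, 3)) else s((i, 1), (i, 2))

/-- per-square matchings -/
def MB (f : Fin n → Bool) : Finset (Sym2 (V n)) :=
  Finset.univ.image (eA f) ∪ Finset.univ.image (eB f)

lemma mem_MA {e : Sym2 (V n)} :
    e ∈ MA n ↔ (∃ i, e = s(((i, 0) : V n), (i, 2))) ∨
      ∃ i, e = s(((i, 3) : V n), (nxt i, 1)) := by
  simp [MA, eq_comm]

lemma mem_MB {f : Fin n → Bool} {e : Sym2 (V n)} :
    e ∈ MB f ↔ (∃ i, e = eA f i) ∨ ∃ i, e = eB f i := by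
  simp [MB, eq_comm]

end Stmt18Aux

namespace Stmt18Aux
variable {n : ℕ}

lemma nxt_injective : Function.Injective (nxt (n := n)) := by
  intro i j h
  have h2 := congrArg prv h
  rwa [prv_nxt, prv_nxt] at h2

lemma sqAdj_same (i : Fin n) {p q : Fin 4}
    (h : p ≠ q ∧ ¬(p = 1 ∧ q = 3) ∧ ¬(p = 3 ∧ q = 1)) : sqAdj n (i, p) (i, q) :=
  Or.inl ⟨rfl, h.1, h.2.1, h.2.2⟩

lemma MA_adj : ∀ e ∈ MA n, ∃ u v, e = s(u, v) ∧ sqAdj n u v := by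
  intro e he
  rw [mem_MA] at he
  rcases he with ⟨i, rfl⟩ | ⟨i, rfl⟩
  · exact ⟨(i, 0), (i, 2), rfl, sqAdj_same i (by decide)⟩
  · exact ⟨(i, 3), (nxt i, 1), rfl, Or.inr (Or.inl ⟨rfl, rfl, rfl⟩)⟩

lemma MA_disj : ∀ e ∈ MA n, ∀ f ∈ MA n, e ≠ f → ∀ w, w ∈ e → w ∉ f := by
  intro e he f hf hne w hwe hwf
  rw [mem_MA] at he hf
  rcases he with ⟨i, rfl⟩ | ⟨i, rfl⟩ <;> rcases hf with ⟨j, rfl⟩ | ⟨j, rfl⟩ <;>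
    simp only [Sym2.mem_iff] at hwe hwf <;>
    rcases hwe with rfl | rfl <;> rcases hwf with h | h
  all_goals simp_all [Prod.mk.injEq, nxt_injective.eq_iff]

lemma MA_cover : ∀ w : V n, ∃ e ∈ MA n, w ∈ e := by
  rintro ⟨i, p⟩
  fin_cases p
  · exact ⟨s(((i, 0) : V n), (i, 2)), mem_MA.2 (Or.inl ⟨i, rfl⟩), Sym2.mem_mk_left _ _⟩
  · refine ⟨s(((prv i, 3) : V n), (nxt (prv i), 1)), mem_MA.2 (Or.inr ⟨prv i, rfl⟩), ?_⟩
    rw [nxt_prv]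
    exact Sym2.mem_mk_right _ _
  · exact ⟨s(((i, 0) : V n), (i, 2)), mem_MA.2 (Or.inl ⟨i, rfl⟩), Sym2.mem_mk_right _ _⟩
  · exact ⟨s(((i, 3) : V n), (nxt i, 1)), mem_MA.2 (Or.inr ⟨i, rfl⟩), Sym2.mem_mk_left _ _⟩

lemma MB_adj (f : Fin n → Bool) : ∀ e ∈ MB f, ∃ u v, e = s(u, v) ∧ sqAdj n u v := by
  intro e he
  rw [mem_MB] at he
  rcases he with ⟨i, rfl⟩ | ⟨i, rfl⟩ <;> cases hf : f i <;>
    simp only [eA, eB, hf, if_true, if_false, Bool.false_eq_true]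
  · exact ⟨(i, 0), (i, 3), rfl, sqAdj_same i (by decide)⟩
  · exact ⟨(i, 0), (i, 1), rfl, sqAdj_same i (by decide)⟩
  · exact ⟨(i, 1), (i, 2), rfl, sqAdj_same i (by decide)⟩
  · exact ⟨(i, 2), (i, 3), rfl, sqAdj_same i (by decide)⟩

lemma MB_disj (f : Fin n → Bool) :
    ∀ e ∈ MB f, ∀ e' ∈ MB f, e ≠ e' → ∀ w, w ∈ e → w ∉ e' := by
  intro e he e' he' hne w hwe hwe'
  rw [mem_MB] at he he'
  rcases he with ⟨i, rfl⟩ | ⟨i, rfl⟩ <;> rcases he' with ⟨j, rfl⟩ | ⟨j, rfl⟩ <;>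
    cases hfi : f i <;> cases hfj : f j <;>
    simp only [eA, eB, hfi, hfj, if_true, if_false, Bool.false_eq_true] at hne hwe hwe' <;>
    simp only [Sym2.mem_iff] at hwe hwe' <;>
    rcases hwe with rfl | rfl <;> rcases hwe' with h | h
  all_goals simp_all [Prod.mk.injEq, nxt_injective.eq_iff]

lemma MB_cover (f : Fin n → Bool) : ∀ w : V n, ∃ e ∈ MB f, w ∈ e := by
  rintro ⟨i, p⟩
  cases hf : f i
  · fin_cases p
    · exact ⟨eA f i, mem_MB.2 (Or.inl ⟨i, rfl⟩), by simp [eA, hf]⟩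
    · exact ⟨eB f i, mem_MB.2 (Or.inr ⟨i, rfl⟩), by simp [eB, hf]⟩
    · exact ⟨eB f i, mem_MB.2 (Or.inr ⟨i, rfl⟩), by simp [eB, hf]⟩
    · exact ⟨eA f i, mem_MB.2 (Or.inl ⟨i, rfl⟩), by simp [eA, hf]⟩
  · fin_cases p
    · exact ⟨eA f i, mem_MB.2 (Or.inl ⟨i, rfl⟩), by simp [eA, hf]⟩
    · exact ⟨eA f i, mem_MB.2 (Or.inl ⟨i, rfl⟩), by simp [eA, hf]⟩
    · exact ⟨eB f i, mem_MB.2 (Or.inr ⟨i, rfl⟩), by simp [eB, hf]⟩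
    · exact ⟨eB f i, mem_MB.2 (Or.inr ⟨i, rfl⟩), by simp [eB, hf]⟩

end Stmt18Aux

namespace Stmt18Aux
variable {n : ℕ} {M : Finset (Sym2 (V n))}

lemma swap_mem {u v : V n} (h : s(u, v) ∈ M) : s(v, u) ∈ M := by
  rw [Sym2.eq_swap]; exact h

lemma uniq (h2 : ∀ e ∈ M, ∀ f ∈ M, e ≠ f → ∀ w, w ∈ e → w ∉ f) {w a b : V n}
    (ha : s(w, a) ∈ M) (hb : s(w, b) ∈ M) : a = b := by
  rcases eq_or_ne (s(w, a)) (s(w, b)) with heq | hne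
  · rw [Sym2.eq_iff] at heq
    rcases heq with ⟨-, h⟩ | ⟨ha', hb'⟩
    · exact h
    · exact hb'.trans ha'
  · exact absurd (Sym2.mem_mk_left w b) (h2 _ ha _ hb hne w (Sym2.mem_mk_left w a))

lemma adj_of_mem (h1 : ∀ e ∈ M, ∃ u v, e = s(u, v) ∧ sqAdj n u v) {u v : V n}
    (h : s(u, v) ∈ M) : sqAdj n u v ∨ sqAdj n v u := by
  obtain ⟨a, b, hab, hadj⟩ := h1 _ h
  rw [Sym2.eq_iff] at hab
  rcases hab with ⟨rfl, rfl⟩ | ⟨rfl, rfl⟩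
  · exact Or.inl hadj
  · exact Or.inr hadj

lemma epartner (h1 : ∀ e ∈ M, ∃ u v, e = s(u, v) ∧ sqAdj n u v)
    (h3 : ∀ w : V n, ∃ e ∈ M, w ∈ e) (w : V n) : ∃ a, s(w, a) ∈ M := by
  obtain ⟨e, he, hwe⟩ := h3 w
  obtain ⟨u, v, rfl, -⟩ := h1 e he
  rw [Sym2.mem_iff] at hwe
  rcases hwe with rfl | rfl
  · exact ⟨v, he⟩
  · exact ⟨u, swap_mem he⟩

lemma fin4_01 {q : Fin 4} (h1 : q ≠ 1) (h3 : q ≠ 3) : q = 0 ∨ q = 2 := by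
  fin_cases q <;> simp_all

lemma fin4_ne0 {q : Fin 4} (h : q ≠ 0) : q = 1 ∨ q = 2 ∨ q = 3 := by
  fin_cases q <;> simp_all

lemma fin4_ne2 {q : Fin 4} (h : q ≠ 2) : q = 0 ∨ q = 1 ∨ q = 3 := by
  fin_cases q <;> simp_all

lemma mem_one (h1' : ∀ e ∈ M, ∃ u v, e = s(u, v) ∧ sqAdj n u v) {i j : Fin n} {q : Fin 4}
    (h : s(((i, 1) : V n), (j, q)) ∈ M) :
    (j = i ∧ q = 0) ∨ (j = i ∧ q = 2) ∨ (j = prv i ∧ q = 3) := by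
  rcases adj_of_mem h1' h with hadj | hadj <;>
    rcases hadj with ⟨ha, hb, hc, hd⟩ | ⟨ha, hb, hc⟩ | ⟨ha, hb, hc⟩
  · have hq3 : q ≠ 3 := fun hq => hc ⟨rfl, hq⟩
    rcases fin4_01 (Ne.symm hb) hq3 with rfl | rfl
    · exact Or.inl ⟨ha.symm, rfl⟩
    · exact Or.inr (Or.inl ⟨ha.symm, rfl⟩)
  · exact absurd hc (by simp)
  · exact Or.inr (Or.inr ⟨eq_prv_of_nxt_eq (Fin.ext ha.symm), hc⟩)
  · have hq3 : q ≠ 3 := fun hq => hd ⟨hq, rfl⟩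
    rcases fin4_01 hb hq3 with rfl | rfl
    · exact Or.inl ⟨ha, rfl⟩
    · exact Or.inr (Or.inl ⟨ha, rfl⟩)
  · exact Or.inr (Or.inr ⟨eq_prv_of_nxt_eq (Fin.ext ha.symm), hc⟩)
  · exact absurd hc (by simp)

lemma mem_three (h1' : ∀ e ∈ M, ∃ u v, e = s(u, v) ∧ sqAdj n u v) {i j : Fin n} {q : Fin 4}
    (h : s(((i, 3) : V n), (j, q)) ∈ M) :
    (j = i ∧ q = 0) ∨ (j = i ∧ q = 2) ∨ (j = nxt i ∧ q = 1) := by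
  rcases adj_of_mem h1' h with hadj | hadj <;>
    rcases hadj with ⟨ha, hb, hc, hd⟩ | ⟨ha, hb, hc⟩ | ⟨ha, hb, hc⟩
  · have hq1 : q ≠ 1 := fun hq => hd ⟨rfl, hq⟩
    rcases fin4_01 hq1 (Ne.symm hb) with rfl | rfl
    · exact Or.inl ⟨ha.symm, rfl⟩
    · exact Or.inr (Or.inl ⟨ha.symm, rfl⟩)
  · exact Or.inr (Or.inr ⟨Fin.ext ha, hb⟩)
  · exact absurd hb (by simp)
  · have hq1 : q ≠ 1 := fun hq => hc ⟨hq, rfl⟩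
    rcases fin4_01 hq1 hb with rfl | rfl
    · exact Or.inl ⟨ha, rfl⟩
    · exact Or.inr (Or.inl ⟨ha, rfl⟩)
  · exact absurd hb (by simp)
  · exact Or.inr (Or.inr ⟨Fin.ext ha, hb⟩)

lemma mem_zero (h1' : ∀ e ∈ M, ∃ u v, e = s(u, v) ∧ sqAdj n u v) {i j : Fin n} {q : Fin 4}
    (h : s(((i, 0) : V n), (j, q)) ∈ M) :
    j = i ∧ (q = 1 ∨ q = 2 ∨ q = 3) := by
  rcases adj_of_mem h1' h with hadj | hadj <;>
    rcases hadj with ⟨ha, hb, hc, hd⟩ | ⟨ha, hb, hc⟩ | ⟨ha, hb, hc⟩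
  · exact ⟨ha.symm, fin4_ne0 (Ne.symm hb)⟩
  · exact absurd hc (by simp)
  · exact absurd hb (by simp)
  · exact ⟨ha, fin4_ne0 hb⟩
  · exact absurd hb (by simp)
  · exact absurd hc (by simp)

lemma mem_two (h1' : ∀ e ∈ M, ∃ u v, e = s(u, v) ∧ sqAdj n u v) {i j : Fin n} {q : Fin 4}
    (h : s(((i, 2) : V n), (j, q)) ∈ M) :
    j = i ∧ (q = 0 ∨ q = 1 ∨ q = 3) := by
  rcases adj_of_mem h1' h with hadj | hadj <;>
    rcases hadj with ⟨ha, hb, hc, hd⟩ | ⟨ha, hb, hc⟩ | ⟨ha, hb, hc⟩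
  · exact ⟨ha.symm, fin4_ne2 (Ne.symm hb)⟩
  · exact absurd hc (by simp)
  · exact absurd hb (by simp)
  · exact ⟨ha, fin4_ne2 hb⟩
  · exact absurd hb (by simp)
  · exact absurd hc (by simp)

end Stmt18Aux

namespace Stmt18Aux
variable {n : ℕ} {M : Finset (Sym2 (V n))}

lemma fin4_all (p : Fin 4) : p = 0 ∨ p = 1 ∨ p = 2 ∨ p = 3 := by revert p; decide

lemma stepA (h1 : ∀ e ∈ M, ∃ u v, e = s(u, v) ∧ sqAdj n u v)
    (h2 : ∀ e ∈ M, ∀ f ∈ M, e ≠ f → ∀ w, w ∈ e → w ∉ f)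
    (h3 : ∀ w : V n, ∃ e ∈ M, w ∈ e) {i : Fin n}
    (h : s(((i, 3) : V n), (nxt i, 1)) ∈ M) :
    s((((nxt i), 3) : V n), (nxt (nxt i), 1)) ∈ M := by
  obtain ⟨a, ha⟩ := epartner h1 h3 (nxt i, 3)
  obtain ⟨j, q⟩ := a
  rcases mem_three h1 ha with ⟨rfl, rfl⟩ | ⟨rfl, rfl⟩ | ⟨rfl, rfl⟩
  · -- partner of (nxt i,3) is (nxt i,0): contradiction via (nxt i,2)
    exfalso
    obtain ⟨b, hb⟩ := epartner h1 h3 (nxt i, 2)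
    obtain ⟨k, r⟩ := b
    obtain ⟨rfl, hr⟩ := mem_two h1 hb
    rcases hr with rfl | rfl | rfl
    · have heq := uniq h2 (swap_mem ha) (swap_mem hb)
      simp at heq
    · have heq := uniq h2 (swap_mem hb) (swap_mem h)
      exact absurd (congrArg Prod.snd heq) (by simp)
    · have heq := uniq h2 ha (swap_mem hb)
      simp at heq
  · -- partner of (nxt i,3) is (nxt i,2): contradiction via (nxt i,0)
    exfalso
    obtain ⟨b, hb⟩ := epartner h1 h3 (nxt i, 0)
    obtain ⟨k, r⟩ := b
    obtain ⟨rfl, hr⟩ := mem_zero h1 hb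
    rcases hr with rfl | rfl | rfl
    · have heq := uniq h2 (swap_mem hb) (swap_mem h)
      exact absurd (congrArg Prod.snd heq) (by simp)
    · have heq := uniq h2 (swap_mem hb) (swap_mem ha)
      simp at heq
    · have heq := uniq h2 (swap_mem hb) ha
      simp at heq
  · exact ha

lemma allA (h1 : ∀ e ∈ M, ∃ u v, e = s(u, v) ∧ sqAdj n u v)
    (h2 : ∀ e ∈ M, ∀ f ∈ M, e ≠ f → ∀ w, w ∈ e → w ∉ f)
    (h3 : ∀ w : V n, ∃ e ∈ M, w ∈ e)
    (hex : ∃ i, s(((i, 3) : V n), (nxt i, 1)) ∈ M) :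
    ∀ k, s(((k, 3) : V n), (nxt k, 1)) ∈ M := by
  obtain ⟨i, hi⟩ := hex
  have hiter : ∀ t, s(((nxt^[t] i, 3) : V n), (nxt (nxt^[t] i), 1)) ∈ M := by
    intro t
    induction t with
    | zero => exact hi
    | succ t ih =>
        rw [Function.iterate_succ_apply']
        exact stepA h1 h2 h3 ih
  intro k
  obtain ⟨t, ht⟩ := exists_iter i k
  have hk := hiter t
  rwa [ht] at hk

lemma eqMA (h1 : ∀ e ∈ M, ∃ u v, e = s(u, v) ∧ sqAdj n u v)
    (h2 : ∀ e ∈ M, ∀ f ∈ M, e ≠ f → ∀ w, w ∈ e → w ∉ f)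
    (h3 : ∀ w : V n, ∃ e ∈ M, w ∈ e)
    (hex : ∃ i, s(((i, 3) : V n), (nxt i, 1)) ∈ M) : M = MA n := by
  have hall := allA h1 h2 h3 hex
  have hdiag : ∀ k, s(((k, 0) : V n), (k, 2)) ∈ M := by
    intro k
    obtain ⟨a, ha⟩ := epartner h1 h3 (k, 0)
    obtain ⟨j, q⟩ := a
    obtain ⟨rfl, hr⟩ := mem_zero h1 ha
    rcases hr with rfl | rfl | rfl
    · exfalso
      have h13 := hall (prv j)
      rw [nxt_prv] at h13
      have heq := uniq h2 (swap_mem ha) (swap_mem h13)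
      exact absurd (congrArg Prod.snd heq) (by simp)
    · exact ha
    · exfalso
      have heq := uniq h2 (swap_mem ha) (hall j)
      exact absurd (congrArg Prod.snd heq) (by simp)
  apply Finset.Subset.antisymm
  · intro e he
    obtain ⟨u, v, rfl, -⟩ := h1 e he
    obtain ⟨k, p⟩ := u
    rw [mem_MA]
    rcases fin4_all p with rfl | rfl | rfl | rfl
    · have hv := uniq h2 he (hdiag k)
      rw [hv]
      exact Or.inl ⟨k, rfl⟩
    · have h13 := hall (prv k)
      rw [nxt_prv] at h13
      have hv := uniq h2 he (swap_mem h13)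
      rw [hv]
      exact Or.inr ⟨prv k, by rw [nxt_prv, Sym2.eq_swap]⟩
    · have hv := uniq h2 he (swap_mem (hdiag k))
      rw [hv, Sym2.eq_swap]
      exact Or.inl ⟨k, rfl⟩
    · have hv := uniq h2 he (hall k)
      rw [hv]
      exact Or.inr ⟨k, rfl⟩
  · intro e he
    rw [mem_MA] at he
    rcases he with ⟨k, rfl⟩ | ⟨k, rfl⟩
    · exact hdiag k
    · exact hall k

end Stmt18Aux

namespace Stmt18Aux
variable {n : ℕ} {M : Finset (Sym2 (V n))}

lemma mem_one' (h1 : ∀ e ∈ M, ∃ u v, e = s(u, v) ∧ sqAdj n u v)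
    (hnex : ¬ ∃ i, s(((i, 3) : V n), (nxt i, 1)) ∈ M) {i j : Fin n} {q : Fin 4}
    (h : s(((i, 1) : V n), (j, q)) ∈ M) :
    (j = i ∧ q = 0) ∨ (j = i ∧ q = 2) := by
  rcases mem_one h1 h with hc | hc | ⟨rfl, rfl⟩
  · exact Or.inl hc
  · exact Or.inr hc
  · exfalso
    refine hnex ⟨prv i, ?_⟩
    rw [nxt_prv]
    exact swap_mem h

lemma mem_three' (h1 : ∀ e ∈ M, ∃ u v, e = s(u, v) ∧ sqAdj n u v)
    (hnex : ¬ ∃ i, s(((i, 3) : V n), (nxt i, 1)) ∈ M) {i j : Fin n} {q : Fin 4}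
    (h : s(((i, 3) : V n), (j, q)) ∈ M) :
    (j = i ∧ q = 0) ∨ (j = i ∧ q = 2) := by
  rcases mem_three h1 h with hc | hc | ⟨rfl, rfl⟩
  · exact Or.inl hc
  · exact Or.inr hc
  · exact absurd ⟨i, h⟩ hnex

lemma pairsB (h1 : ∀ e ∈ M, ∃ u v, e = s(u, v) ∧ sqAdj n u v)
    (h2 : ∀ e ∈ M, ∀ f ∈ M, e ≠ f → ∀ w, w ∈ e → w ∉ f)
    (h3 : ∀ w : V n, ∃ e ∈ M, w ∈ e)
    (hnex : ¬ ∃ i, s(((i, 3) : V n), (nxt i, 1)) ∈ M) (i : Fin n) :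
    (s(((i, 0) : V n), (i, 1)) ∈ M → s(((i, 2) : V n), (i, 3)) ∈ M) ∧
    (s(((i, 0) : V n), (i, 1)) ∉ M →
      s(((i, 1) : V n), (i, 2)) ∈ M ∧ s(((i, 0) : V n), (i, 3)) ∈ M) := by
  constructor
  · intro hm
    obtain ⟨a, ha⟩ := epartner h1 h3 (i, 3)
    obtain ⟨j, q⟩ := a
    rcases mem_three' h1 hnex ha with ⟨rfl, rfl⟩ | ⟨rfl, rfl⟩
    · exfalso
      have heq := uniq h2 hm (swap_mem ha)
      exact absurd (congrArg Prod.snd heq) (by simp)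
    · exact swap_mem ha
  · intro hm
    obtain ⟨a, ha⟩ := epartner h1 h3 (i, 1)
    obtain ⟨j, q⟩ := a
    rcases mem_one' h1 hnex ha with ⟨rfl, rfl⟩ | ⟨rfl, rfl⟩
    · exact absurd (swap_mem ha) hm
    · refine ⟨ha, ?_⟩
      obtain ⟨b, hb⟩ := epartner h1 h3 (j, 3)
      obtain ⟨k, r⟩ := b
      rcases mem_three' h1 hnex hb with ⟨rfl, rfl⟩ | ⟨rfl, rfl⟩
      · exact swap_mem hb
      · exfalso
        have heq := uniq h2 (swap_mem hb) (swap_mem ha)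
        exact absurd (congrArg Prod.snd heq) (by simp)

lemma eqMB [DecidableEq (Sym2 (V n))]
    (h1 : ∀ e ∈ M, ∃ u v, e = s(u, v) ∧ sqAdj n u v)
    (h2 : ∀ e ∈ M, ∀ f ∈ M, e ≠ f → ∀ w, w ∈ e → w ∉ f)
    (h3 : ∀ w : V n, ∃ e ∈ M, w ∈ e)
    (hnex : ¬ ∃ i, s(((i, 3) : V n), (nxt i, 1)) ∈ M) :
    M = MB (fun i => decide (s(((i, 0) : V n), (i, 1)) ∈ M)) := by
  set f : Fin n → Bool := fun i => decide (s(((i, 0) : V n), (i, 1)) ∈ M) with hf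
  apply Finset.Subset.antisymm
  · intro e he
    obtain ⟨u, v, rfl, -⟩ := h1 e he
    obtain ⟨k, p⟩ := u
    rw [mem_MB]
    by_cases hm : s(((k, 0) : V n), (k, 1)) ∈ M
    · have hfk : f k = true := by simpa [hf] using hm
      have he23 : s(((k, 2) : V n), (k, 3)) ∈ M := (pairsB h1 h2 h3 hnex k).1 hm
      rcases fin4_all p with rfl | rfl | rfl | rfl
      · have hv := uniq h2 he hm
        rw [hv]
        exact Or.inl ⟨k, by simp [eA, hfk]⟩
      · have hv := uniq h2 he (swap_mem hm)
        rw [hv]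
        refine Or.inl ⟨k, ?_⟩
        simp only [eA, hfk, if_true]
        rw [Sym2.eq_swap]
      · have hv := uniq h2 he he23
        rw [hv]
        exact Or.inr ⟨k, by simp [eB, hfk]⟩
      · have hv := uniq h2 he (swap_mem he23)
        rw [hv]
        refine Or.inr ⟨k, ?_⟩
        simp only [eB, hfk, if_true]
        rw [Sym2.eq_swap]
    · have hfk : f k = false := by simpa [hf] using hm
      obtain ⟨he12, he03⟩ := (pairsB h1 h2 h3 hnex k).2 hm
      rcases fin4_all p with rfl | rfl | rfl | rfl
      · have hv := uniq h2 he he03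
        rw [hv]
        exact Or.inl ⟨k, by simp [eA, hfk]⟩
      · have hv := uniq h2 he he12
        rw [hv]
        exact Or.inr ⟨k, by simp [eB, hfk]⟩
      · have hv := uniq h2 he (swap_mem he12)
        rw [hv]
        refine Or.inr ⟨k, ?_⟩
        simp only [eB, hfk, if_false, Bool.false_eq_true]
        rw [Sym2.eq_swap]
      · have hv := uniq h2 he (swap_mem he03)
        rw [hv]
        refine Or.inl ⟨k, ?_⟩
        simp only [eA, hfk, if_false, Bool.false_eq_true]
        rw [Sym2.eq_swap]
  · intro e he
    rw [mem_MB] at he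
    rcases he with ⟨k, rfl⟩ | ⟨k, rfl⟩ <;> by_cases hm : s(((k, 0) : V n), (k, 1)) ∈ M
    · have hfk : f k = true := by simpa [hf] using hm
      simpa [eA, hfk] using hm
    · have hfk : f k = false := by simpa [hf] using hm
      have h03 := ((pairsB h1 h2 h3 hnex k).2 hm).2
      simpa [eA, hfk] using h03
    · have hfk : f k = true := by simpa [hf] using hm
      have h23 := (pairsB h1 h2 h3 hnex k).1 hm
      simpa [eB, hfk] using h23
    · have hfk : f k = false := by simpa [hf] using hm
      have h12 := ((pairsB h1 h2 h3 hnex k).2 hm).1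
      simpa [eB, hfk] using h12

lemma classify (h1 : ∀ e ∈ M, ∃ u v, e = s(u, v) ∧ sqAdj n u v)
    (h2 : ∀ e ∈ M, ∀ f ∈ M, e ≠ f → ∀ w, w ∈ e → w ∉ f)
    (h3 : ∀ w : V n, ∃ e ∈ M, w ∈ e) :
    M = MA n ∨ ∃ f, M = MB f := by
  classical
  by_cases hex : ∃ i, s(((i, 3) : V n), (nxt i, 1)) ∈ M
  · exact Or.inl (eqMA h1 h2 h3 hex)
  · exact Or.inr ⟨_, eqMB h1 h2 h3 hex⟩

lemma MA_ne_MB (hn : 1 ≤ n) (f : Fin n → Bool) : MA n ≠ MB f := by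
  intro h
  set i0 : Fin n := ⟨0, hn⟩ with hi0
  have hmem : s(((i0, 0) : V n), (i0, 2)) ∈ MA n := mem_MA.2 (Or.inl ⟨i0, rfl⟩)
  rw [h, mem_MB] at hmem
  rcases hmem with ⟨j, hj⟩ | ⟨j, hj⟩ <;> cases hfj : f j <;>
    simp_all [eA, eB, Sym2.eq_iff, Prod.ext_iff]

lemma MB_injective {f g : Fin n → Bool} (h : MB f = MB g) : f = g := by
  funext i
  have hmem : eA f i ∈ MB g := by
    rw [← h]
    exact mem_MB.2 (Or.inl ⟨i, rfl⟩)
  rw [mem_MB] at hmem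
  rcases hmem with ⟨j, hj⟩ | ⟨j, hj⟩ <;> cases hfi : f i <;> cases hgj : g j <;>
    simp only [eA, eB, hfi, hgj, if_true, if_false, Bool.false_eq_true] at hj <;>
    simp_all [Sym2.eq_iff, Prod.ext_iff]

end Stmt18Aux

/-- The number of perfect matchings of the "squares in a cycle" graph `G_n` is
exactly `1 + 2^n`. -/
theorem stmt18 (n : ℕ) (hn : 1 ≤ n) :
    Nat.card {M : Finset (Sym2 (Fin n × Fin 4)) //
      (∀ e ∈ M, ∃ u v, e = s(u, v) ∧ sqAdj n u v) ∧
      (∀ e ∈ M, ∀ f ∈ M, e ≠ f → ∀ w, w ∈ e → w ∉ f) ∧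
      (∀ w : Fin n × Fin 4, ∃ e ∈ M, w ∈ e)} = 1 + 2 ^ n := by
  classical
  open Stmt18Aux in
  let F : Option (Fin n → Bool) → {M : Finset (Sym2 (Fin n × Fin 4)) //
      (∀ e ∈ M, ∃ u v, e = s(u, v) ∧ sqAdj n u v) ∧
      (∀ e ∈ M, ∀ f ∈ M, e ≠ f → ∀ w, w ∈ e → w ∉ f) ∧
      (∀ w : Fin n × Fin 4, ∃ e ∈ M, w ∈ e)} := fun o =>
    match o with
    | none => ⟨MA n, MA_adj, MA_disj, MA_cover⟩
    | some f => ⟨MB f, MB_adj f, MB_disj f, MB_cover f⟩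
  have hinj : Function.Injective F := by
    rintro (_ | f) (_ | g) h
    · rfl
    · exact absurd (congrArg Subtype.val h) (MA_ne_MB hn g)
    · exact absurd (congrArg Subtype.val h).symm (MA_ne_MB hn f)
    · rw [MB_injective (congrArg Subtype.val h)]
  have hsurj : Function.Surjective F := by
    rintro ⟨M, hM1, hM2, hM3⟩
    rcases classify hM1 hM2 hM3 with hMA | ⟨f, hMB⟩
    · exact ⟨none, Subtype.ext hMA.symm⟩
    · exact ⟨some f, Subtype.ext hMB.symm⟩
  have hcard := Nat.card_congr (Equiv.ofBijective F ⟨hinj, hsurj⟩)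
  rw [← hcard, Nat.card_eq_fintype_card, Fintype.card_option]
  simp [Fintype.card_fun]
  omega
end
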